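/- Let N ≥ 1, let S₁, S₂ be symmetric real N×N matrices, let M be a symmetric positive definite real N×N matrix, let τ₂ > 0, Δt > 0, F : ℝᴺ × ℝᴺ → ℝ continuously differentiable, and fix ζ ∈ ℝᴺ. Suppose v, v⁺ ∈ ℝᴺ satisfy the AVF step for the v-equation with u frozen at ζ: τ₂ M (v⁺ - v) = Δt [ -S₂ (v⁺ + v)/2 - ∫₀¹ ∇_v F(ζ, (1-ξ)v + ξ v⁺) dξ ]. Then, with E(u,v) = ½ uᵀS₁u - ½ vᵀS₂v - F(u,v), one has E(ζ, v⁺) - E(ζ, v) = (τ₂/Δt)(v⁺-v)ᵀM(v⁺-v) ≥ 0; in particular E(ζ, v⁺) ≥ E(ζ, v). -/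

import Mathlib

/-!
Along the segment from `v` to `v'` the fundamental theorem of calculus gives
`F(ζ,v') - F(ζ,v) = (v' - v) ⬝ᵥ ∫₀¹ ∇_v F(ζ, (1-ξ)v + ξv') dξ`, and symmetry of `S₂` gives
`(v' - v) ⬝ᵥ S₂ (v' + v) = v' ⬝ᵥ S₂ v' - v ⬝ᵥ S₂ v`. So the dot product of the AVF step with
`v' - v` turns its right-hand side into `Δt` times the energy gain, while its left-hand side is
`τ₂ (v' - v) ⬝ᵥ M (v' - v) ≥ 0`.
-/

open Matrix

theorem Matrix.IsSymm.sub_dotProduct_mulVec_add {ι R : Type*} [Fintype ι] [CommRing R]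
    {S : Matrix ι ι R} (hS : S.IsSymm) (x y : ι → R) :
    (y - x) ⬝ᵥ S *ᵥ (y + x) = y ⬝ᵥ S *ᵥ y - x ⬝ᵥ S *ᵥ x := by
  have hcross : x ⬝ᵥ S *ᵥ y = y ⬝ᵥ S *ᵥ x := by
    rw [dotProduct_mulVec, ← mulVec_transpose, hS.eq, dotProduct_comm]
  rw [mulVec_add, sub_dotProduct, dotProduct_add, dotProduct_add, hcross]
  ring

theorem intervalIntegral_dotProduct {ι : Type*} [Fintype ι] {μ : MeasureTheory.Measure ℝ}
    {f : ℝ → ι → ℝ} {a b : ℝ} (hf : IntervalIntegrable f μ a b) (w : ι → ℝ) :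
    (∫ ξ in a..b, f ξ ∂μ) ⬝ᵥ w = ∫ ξ in a..b, f ξ ⬝ᵥ w ∂μ :=
  ((LinearMap.toContinuousLinearMap ((dotProductBilin ℝ ℝ).flip w)).intervalIntegral_comp_comm
    hf).symm

section PartialGradient

variable {E ι : Type*} [NormedAddCommGroup E] [NormedSpace ℝ E] [Fintype ι]
  {F : E × (ι → ℝ) → ℝ} {Fv : E × (ι → ℝ) → ι → ℝ}

theorem continuous_of_fderiv_inr_eq_dotProduct (hF : ContDiff ℝ 1 F)
    (hFv : ∀ p w, fderiv ℝ F p (0, w) = Fv p ⬝ᵥ w) : Continuous Fv := by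
  classical
  refine continuous_pi fun i => ?_
  have hcoord : (fun p => Fv p i) = fun p => fderiv ℝ F p (0, Pi.single i 1) := by
    funext p
    rw [hFv, dotProduct_single, mul_one]
  rw [hcoord]
  exact (hF.continuous_fderiv one_ne_zero).clm_apply continuous_const

theorem hasDerivAt_comp_segment_of_fderiv_inr_eq_dotProduct (hF : Differentiable ℝ F)
    (hFv : ∀ p w, fderiv ℝ F p (0, w) = Fv p ⬝ᵥ w) (z : E) (x y : ι → ℝ) (ξ : ℝ) :
    HasDerivAt (fun ξ : ℝ => F (z, (1 - ξ) • x + ξ • y))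
      (Fv (z, (1 - ξ) • x + ξ • y) ⬝ᵥ (y - x)) ξ := by
  have hsegment : HasDerivAt (fun ξ : ℝ => (z, (1 - ξ) • x + ξ • y)) ((0 : E), y - x) ξ := by
    refine (hasDerivAt_const ξ z).prodMk <|
      ((((hasDerivAt_id ξ).const_sub 1).smul_const x).add
        ((hasDerivAt_id ξ).smul_const y)).congr_deriv ?_
    rw [neg_one_smul, one_smul, neg_add_eq_sub]
  rw [← hFv]
  exact (hF _).hasFDerivAt.comp_hasDerivAt ξ hsegment

theorem sub_eq_dotProduct_integral_of_fderiv_inr_eq_dotProduct (hF : ContDiff ℝ 1 F)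
    (hFv : ∀ p w, fderiv ℝ F p (0, w) = Fv p ⬝ᵥ w) (z : E) (x y : ι → ℝ) :
    F (z, y) - F (z, x) = (y - x) ⬝ᵥ ∫ ξ in (0 : ℝ)..1, Fv (z, (1 - ξ) • x + ξ • y) := by
  have hFv_cont : Continuous fun ξ : ℝ => Fv (z, (1 - ξ) • x + ξ • y) :=
    (continuous_of_fderiv_inr_eq_dotProduct hF hFv).comp (by fun_prop)
  rw [dotProduct_comm, intervalIntegral_dotProduct (hFv_cont.intervalIntegrable 0 1),
    intervalIntegral.integral_eq_sub_of_hasDerivAt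
      (fun ξ _ => hasDerivAt_comp_segment_of_fderiv_inr_eq_dotProduct
        (hF.differentiable one_ne_zero) hFv z x y ξ)
      ((hFv_cont.dotProduct continuous_const).intervalIntegrable 0 1)]
  simp

end PartialGradient

theorem avf_frozen_u_energy_increase_general (N : ℕ)
    (S₁ S₂ M : Matrix (Fin N) (Fin N) ℝ)
    (hS₂ : S₂.IsSymm) (hM : M.PosDef)
    (τ₂ Δt : ℝ) (hτ₂ : 0 < τ₂) (hΔt : 0 < Δt)
    (F : (Fin N → ℝ) × (Fin N → ℝ) → ℝ) (hF : ContDiff ℝ 1 F)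
    -- `Fv p` is the partial gradient `∇_v F` at `p`
    (Fv : (Fin N → ℝ) × (Fin N → ℝ) → (Fin N → ℝ))
    (hFv : ∀ p : (Fin N → ℝ) × (Fin N → ℝ), ∀ w : Fin N → ℝ,
      fderiv ℝ F p (0, w) = Fv p ⬝ᵥ w)
    (ζ v v' : Fin N → ℝ)
    -- the AVF step for the v-equation with u frozen at ζ
    (havfv : τ₂ • M.mulVec (v' - v) =
      Δt • (-((1/2 : ℝ) • S₂.mulVec (v' + v)) -
        ∫ ξ in (0:ℝ)..1, Fv (ζ, (1 - ξ) • v + ξ • v'))) :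
    ((1/2) * (ζ ⬝ᵥ S₁.mulVec ζ) - (1/2) * (v' ⬝ᵥ S₂.mulVec v') - F (ζ, v')) -
    ((1/2) * (ζ ⬝ᵥ S₁.mulVec ζ) - (1/2) * (v ⬝ᵥ S₂.mulVec v) - F (ζ, v)) =
      (τ₂ / Δt) * ((v' - v) ⬝ᵥ M.mulVec (v' - v)) ∧
    0 ≤ (τ₂ / Δt) * ((v' - v) ⬝ᵥ M.mulVec (v' - v)) ∧
    (1/2) * (ζ ⬝ᵥ S₁.mulVec ζ) - (1/2) * (v ⬝ᵥ S₂.mulVec v) - F (ζ, v) ≤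
      (1/2) * (ζ ⬝ᵥ S₁.mulVec ζ) - (1/2) * (v' ⬝ᵥ S₂.mulVec v') - F (ζ, v') := by
  have hF_sub := sub_eq_dotProduct_integral_of_fderiv_inr_eq_dotProduct hF hFv ζ v v'
  have hS₂_sub := hS₂.sub_dotProduct_mulVec_add v v'
  have hstep := congrArg ((v' - v) ⬝ᵥ ·) havfv
  simp only [dotProduct_smul, dotProduct_sub, dotProduct_neg, smul_eq_mul] at hstep
  have hM_nonneg : 0 ≤ (v' - v) ⬝ᵥ M *ᵥ (v' - v) := by
    simpa using hM.posSemidef.dotProduct_mulVec_nonneg (v' - v)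
  have hgain : (1/2) * (v ⬝ᵥ S₂ *ᵥ v) - (1/2) * (v' ⬝ᵥ S₂ *ᵥ v') - (F (ζ, v') - F (ζ, v)) =
      τ₂ / Δt * ((v' - v) ⬝ᵥ M *ᵥ (v' - v)) := by
    rw [div_mul_eq_mul_div τ₂, eq_div_iff hΔt.ne', hstep, hF_sub, hS₂_sub]
    ring
  have hgain_nonneg := mul_nonneg (div_nonneg hτ₂.le hΔt.le) hM_nonneg
  exact ⟨by linarith, hgain_nonneg, by linarith⟩

/-- With the first component frozen at `ζ`, one AVF step for the `v`-equation of a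
semi-discretized skew-gradient system increases the energy
`E(u,v) = ½uᵀS₁u - ½vᵀS₂v - F(u,v)`:
`E(ζ,v⁺) - E(ζ,v) = (τ₂/Δt)(v⁺-v)ᵀM(v⁺-v) ≥ 0`. -/
theorem avf_frozen_u_energy_increase (N : ℕ) (hN : 1 ≤ N)
    (S₁ S₂ M : Matrix (Fin N) (Fin N) ℝ)
    (hS₁ : S₁.IsSymm) (hS₂ : S₂.IsSymm) (hMsym : M.IsSymm) (hM : M.PosDef)
    (τ₂ Δt : ℝ) (hτ₂ : 0 < τ₂) (hΔt : 0 < Δt)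
    (F : (Fin N → ℝ) × (Fin N → ℝ) → ℝ) (hF : ContDiff ℝ 1 F)
    -- `Fv p` is the partial gradient `∇_v F` at `p`
    (Fv : (Fin N → ℝ) × (Fin N → ℝ) → (Fin N → ℝ))
    (hFv : ∀ p : (Fin N → ℝ) × (Fin N → ℝ), ∀ w : Fin N → ℝ,
      fderiv ℝ F p (0, w) = Fv p ⬝ᵥ w)
    (ζ v v' : Fin N → ℝ)
    -- the AVF step for the v-equation with u frozen at ζ
    (havfv : τ₂ • M.mulVec (v' - v) =
      Δt • (-((1/2 : ℝ) • S₂.mulVec (v' + v)) -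
        ∫ ξ in (0:ℝ)..1, Fv (ζ, (1 - ξ) • v + ξ • v'))) :
    ((1/2) * (ζ ⬝ᵥ S₁.mulVec ζ) - (1/2) * (v' ⬝ᵥ S₂.mulVec v') - F (ζ, v')) -
    ((1/2) * (ζ ⬝ᵥ S₁.mulVec ζ) - (1/2) * (v ⬝ᵥ S₂.mulVec v) - F (ζ, v)) =
      (τ₂ / Δt) * ((v' - v) ⬝ᵥ M.mulVec (v' - v)) ∧
    0 ≤ (τ₂ / Δt) * ((v' - v) ⬝ᵥ M.mulVec (v' - v)) ∧
    (1/2) * (ζ ⬝ᵥ S₁.mulVec ζ) - (1/2) * (v ⬝ᵥ S₂.mulVec v) - F (ζ, v) ≤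
      (1/2) * (ζ ⬝ᵥ S₁.mulVec ζ) - (1/2) * (v' ⬝ᵥ S₂.mulVec v') - F (ζ, v') :=
  avf_frozen_u_energy_increase_general N S₁ S₂ M hS₂ hM τ₂ Δt hτ₂ hΔt F hF Fv hFv ζ v v' havfv
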